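/- arXiv:1405.6521 — 5 statements merged into one kernel-verified Lean document; each statement's English description precedes it below -/
import Mathlib

section
/- Let α_n : (Z/2)^n → Z/2 be defined by α_n(x) = Σ_{i<j<k} x_i x_j x_k + Σ_{i<j} x_i x_j + Σ_i x_i. Then α_n(x) = 0 if and only if the Hamming weight of x (the number of nonzero coordinates) is congruent to 0 modulo 4. -/
/-!
A `0/1`-vector of Hamming weight `w` is the indicator of its support, so the three sums in
`α_n` count the `3`-, `2`- and `1`-element subsets of the support: `α_n(x)` is the parity of
`C(w,3) + C(w,2) + C(w,1)`, and that number is even exactly when `4 ∣ w`.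
-/

/-- The cubic form `α_n(x) = Σ_{i<j<k} x_i x_j x_k + Σ_{i<j} x_i x_j + Σ_i x_i`
on `(ℤ/2)^n`. -/
def cubicFormOn (n : ℕ) (x : Fin n → ZMod 2) : ZMod 2 :=
  (∑ t ∈ Finset.univ.filter
      (fun t : Fin n × Fin n × Fin n => t.1 < t.2.1 ∧ t.2.1 < t.2.2),
      x t.1 * x t.2.1 * x t.2.2)
  + (∑ t ∈ Finset.univ.filter (fun t : Fin n × Fin n => t.1 < t.2),
      x t.1 * x t.2)
  + ∑ i, x i

open Finset

section Recursion

variable {M : Type*} [AddCommMonoid M] {n : ℕ}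

theorem Fin.sum_filter_lt_succ (f : Fin (n + 1) → Fin (n + 1) → M) :
    ∑ t ∈ univ.filter (fun t : Fin (n + 1) × Fin (n + 1) => t.1 < t.2), f t.1 t.2 =
      ∑ j : Fin n, f 0 j.succ +
        ∑ t ∈ univ.filter (fun t : Fin n × Fin n => t.1 < t.2), f t.1.succ t.2.succ := by
  simp [sum_filter, Fintype.sum_prod_type, Fin.sum_univ_succ, Fin.succ_pos]

theorem Fin.sum_filter_lt_lt_succ (f : Fin (n + 1) → Fin (n + 1) → Fin (n + 1) → M) :
    ∑ t ∈ univ.filter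
        (fun t : Fin (n + 1) × Fin (n + 1) × Fin (n + 1) => t.1 < t.2.1 ∧ t.2.1 < t.2.2),
        f t.1 t.2.1 t.2.2 =
      ∑ t ∈ univ.filter (fun t : Fin n × Fin n => t.1 < t.2), f 0 t.1.succ t.2.succ +
        ∑ t ∈ univ.filter (fun t : Fin n × Fin n × Fin n => t.1 < t.2.1 ∧ t.2.1 < t.2.2),
          f t.1.succ t.2.1.succ t.2.2.succ := by
  simp [sum_filter, Fintype.sum_prod_type, Fin.sum_univ_succ, Fin.succ_pos]

end Recursion

section Indicator

variable {R : Type*} [CommSemiring R]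

theorem sum_eq_card_filter_of_boole {ι : Type*} [Fintype ι] (p : ι → Prop) [DecidablePred p]
    {x : ι → R} (hx : ∀ i, x i = if p i then 1 else 0) : ∑ i, x i = #{i | p i} := by
  simp [hx, sum_boole]

theorem Fin.sum_lt_mul_eq_choose_two_of_boole {n : ℕ} (p : Fin n → Prop) [DecidablePred p]
    {x : Fin n → R} (hx : ∀ i, x i = if p i then 1 else 0) :
    ∑ t ∈ univ.filter (fun t : Fin n × Fin n => t.1 < t.2), x t.1 * x t.2 =
      (#{i | p i}).choose 2 := by
  induction n with
  | zero => simp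
  | succ n ih =>
    rw [Fin.sum_filter_lt_succ (fun i j => x i * x j), ← mul_sum,
      sum_eq_card_filter_of_boole (p ∘ Fin.succ) (fun i => hx i.succ),
      ih (p ∘ Fin.succ) (fun i => hx i.succ), Fin.card_filter_univ_succ, hx 0]
    by_cases h : p 0
    · simp [h, Nat.choose_succ_succ']
    · simp [h]

theorem Fin.sum_lt_lt_mul_eq_choose_three_of_boole {n : ℕ} (p : Fin n → Prop)
    [DecidablePred p] {x : Fin n → R} (hx : ∀ i, x i = if p i then 1 else 0) :
    ∑ t ∈ univ.filter (fun t : Fin n × Fin n × Fin n => t.1 < t.2.1 ∧ t.2.1 < t.2.2),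
      x t.1 * x t.2.1 * x t.2.2 = (#{i | p i}).choose 3 := by
  induction n with
  | zero => simp
  | succ n ih =>
    rw [Fin.sum_filter_lt_lt_succ (fun i j k => x i * x j * x k)]
    simp only [mul_assoc]
    rw [← mul_sum]
    simp only [← mul_assoc]
    rw [Fin.sum_lt_mul_eq_choose_two_of_boole (p ∘ Fin.succ) (fun i => hx i.succ),
      ih (p ∘ Fin.succ) (fun i => hx i.succ), Fin.card_filter_univ_succ, hx 0]
    by_cases h : p 0
    · simp [h, Nat.choose_succ_succ']
    · simp [h]

end Indicator

theorem Nat.choose_three_add_choose_two_add_self_mod_two_eq_zero_iff (w : ℕ) :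
    (w.choose 3 + w.choose 2 + w) % 2 = 0 ↔ w % 4 = 0 := by
  suffices (w % 4 ≤ 1 ↔ w.choose 2 % 2 = 0) ∧ (w % 4 = 3 ↔ w.choose 3 % 2 = 1) by omega
  induction w with
  | zero => decide
  | succ w ih =>
    have h2 : (w + 1).choose 2 = w + w.choose 2 := by
      rw [Nat.choose_succ_succ', Nat.choose_one_right]
    have h3 : (w + 1).choose 3 = w.choose 2 + w.choose 3 := Nat.choose_succ_succ' w 2
    omega

/-- `α_n(x) = 0` iff the Hamming weight of `x` is `≡ 0 (mod 4)`. -/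
theorem stmt_3 (n : ℕ) (x : Fin n → ZMod 2) :
    cubicFormOn n x = 0 ↔ (Finset.univ.filter (fun i => x i = 1)).card % 4 = 0 := by
  have hx : ∀ i, x i = if x i = 1 then 1 else 0 := fun i =>
    (by decide : ∀ a : ZMod 2, a = if a = 1 then 1 else 0) (x i)
  rw [cubicFormOn, Fin.sum_lt_lt_mul_eq_choose_three_of_boole _ hx,
    Fin.sum_lt_mul_eq_choose_two_of_boole _ hx, sum_eq_card_filter_of_boole _ hx,
    ← Nat.choose_three_add_choose_two_add_self_mod_two_eq_zero_iff]
  exact_mod_cast ZMod.natCast_eq_zero_iff_even.trans Nat.even_iff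
end

section
/- For k even, the Clifford quadratic forms α_Cl(2k,0) and α_Cl(0,2k) on (Z/2)^{2k} are equivalent to each other and to the direct sum (α_Cl(0,2))^{k/2} ⊕ (α_Cl(2,0))^{k/2}, i.e. to the form Σ_{j=1}^{k/2} (x_{2j-1}x_{2j} + x_{2j-1} + x_{2j}) + Σ_{j=k/2+1}^{k} x_{2j-1}x_{2j}. -/
/-
Group the coordinates of `x ∈ (ℤ/2)^{2k}` into pairs `(a_j, b_j) = (x_{2j}, x_{2j+1})` and put
`s_j = a_j + b_j`. Then `Σ_{i<j} x_i x_j = Σ_j a_j b_j + Σ_{i<j} s_i s_j`. The substitution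
`a_j ↦ a_j + T_j`, `b_j ↦ b_j + T_j` with `T_j = Σ_{i>j} s_i` leaves every `s_j` unchanged, so it
is an involution, and since `T_j² = T_j` and `Σ_j T_j = Σ_i i s_i` it carries
`Σ_j a_j b_j + Σ_{i<j} s_i s_j + c Σ_j s_j` to `Σ_j (a_j b_j + (j + c)(a_j + b_j))`.
Hence `α_Cl(2k,0)` (`c = 0`) and `α_Cl(0,2k)` (`c = 1`) are orthogonal sums of `k` planes, of
the types `α_Cl(2,0)` and `α_Cl(0,2)` alternately. For even `k` each type occurs `k/2` times,
and a permutation of the pairs brings both forms to the stated normal form.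
-/

/-- The Clifford generating quadratic form `α_Cl(p,q)` on `(ℤ/2)^m`, `m = p+q`:
`Σ_{i<j} x_i x_j + Σ_{i>p} x_i` (0-based: linear terms for indices `≥ p`). -/
def cliffordForm (p q : ℕ) (x : Fin (p + q) → ZMod 2) : ZMod 2 :=
  (∑ t ∈ Finset.univ.filter
      (fun t : Fin (p + q) × Fin (p + q) => t.1 < t.2), x t.1 * x t.2)
  + ∑ i ∈ Finset.univ.filter (fun i : Fin (p + q) => p ≤ (i : ℕ)), x i

open Finset

def FormEquivalent {R M N : Type*} [Semiring R] [AddCommMonoid M] [Module R M]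
    [AddCommMonoid N] [Module R N] (Q : M → R) (Q' : N → R) : Prop :=
  ∃ G : N ≃ₗ[R] M, ∀ x, Q (G x) = Q' x

namespace FormEquivalent

variable {R M N P : Type*} [Semiring R] [AddCommMonoid M] [Module R M]
  [AddCommMonoid N] [Module R N] [AddCommMonoid P] [Module R P]
  {Q₁ : M → R} {Q₂ : N → R} {Q₃ : P → R}

theorem symm (h : FormEquivalent Q₁ Q₂) : FormEquivalent Q₂ Q₁ := by
  obtain ⟨G, hG⟩ := h
  exact ⟨G.symm, fun x => by rw [← hG, G.apply_symm_apply]⟩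

theorem trans (h₁₂ : FormEquivalent Q₁ Q₂) (h₂₃ : FormEquivalent Q₂ Q₃) :
    FormEquivalent Q₁ Q₃ := by
  obtain ⟨G, hG⟩ := h₁₂
  obtain ⟨H, hH⟩ := h₂₃
  exact ⟨H.trans G, fun x => by rw [LinearEquiv.trans_apply, hG, hH]⟩

end FormEquivalent

theorem Fintype.sum_lex {α β M : Type*} [Fintype α] [Fintype β] [AddCommMonoid M]
    (f : α ×ₗ β → M) : ∑ p, f p = ∑ a, ∑ b, f (toLex (a, b)) := by
  rw [← Fintype.sum_prod_type']
  exact (Fintype.sum_equiv toLex _ _ fun _ => rfl).symm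

section esymm2

variable {R ι κ : Type*} [CommRing R] [Fintype ι] [LinearOrder ι] [Fintype κ] [LinearOrder κ]

def esymm2 (x : ι → R) : R :=
  ∑ t ∈ univ.filter (fun t : ι × ι => t.1 < t.2), x t.1 * x t.2

theorem esymm2_eq_sum_ite (x : ι → R) :
    esymm2 x = ∑ i, ∑ j, if i < j then x i * x j else 0 := by
  rw [esymm2, sum_filter, ← Fintype.sum_prod_type']

theorem esymm2_eq_sum_mul_sum_Ioi [LocallyFiniteOrderTop ι] (x : ι → R) :
    esymm2 x = ∑ i, x i * ∑ j ∈ Ioi i, x j := by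
  simp only [esymm2_eq_sum_ite, mul_sum, ← sum_filter]
  refine sum_congr rfl fun i _ => sum_congr ?_ fun _ _ => rfl
  ext j
  simp

theorem esymm2_comp_orderIso (e : ι ≃o κ) (x : κ → R) : esymm2 (x ∘ e) = esymm2 x := by
  simp only [esymm2_eq_sum_ite, Function.comp_apply, e.lt_iff_lt.symm]
  rw [← e.toEquiv.sum_comp]
  exact sum_congr rfl fun i _ =>
    e.toEquiv.sum_comp fun j => if e i < j then x (e i) * x j else 0

theorem esymm2_fin_two (x : Fin 2 → R) : esymm2 x = x 0 * x 1 := by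
  simp [esymm2_eq_sum_ite, Fin.sum_univ_two]

theorem esymm2_lex {α β : Type*} [Fintype α] [LinearOrder α] [Fintype β] [LinearOrder β]
    (y : α ×ₗ β → R) :
    esymm2 y = ∑ a, esymm2 (fun b => y (toLex (a, b)))
      + esymm2 (fun a => ∑ b, y (toLex (a, b))) := by
  have hsplit : ∀ a b a' b',
      (if toLex (a, b) < toLex (a', b') then y (toLex (a, b)) * y (toLex (a', b')) else 0)
        = (if a < a' then y (toLex (a, b)) * y (toLex (a', b')) else 0)
          + if a = a' ∧ b < b' then y (toLex (a, b)) * y (toLex (a', b')) else 0 := by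
    intro a b a' b'
    simp only [Prod.Lex.toLex_lt_toLex]
    split_ifs <;> simp_all
  simp only [esymm2_eq_sum_ite, Fintype.sum_lex, hsplit, sum_add_distrib]
  rw [add_comm]
  congr 1
  · refine sum_congr rfl fun a _ => sum_congr rfl fun b _ => ?_
    rw [sum_comm]
    simp only [ite_and, sum_ite_eq, mem_univ, if_true]
  · refine sum_congr rfl fun a _ => ?_
    rw [sum_comm]
    refine sum_congr rfl fun a' _ => ?_
    split_ifs <;> simp [sum_mul_sum]

end esymm2

section pairs

variable {R : Type*} [CommRing R]

def interleave (k : ℕ) : Fin k ×ₗ Fin 2 ≃o Fin (2 * k) where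
  toFun p := ⟨2 * (ofLex p).1 + (ofLex p).2, by omega⟩
  invFun m := toLex (⟨m / 2, by omega⟩, ⟨m % 2, by omega⟩)
  left_inv p := by
    obtain ⟨⟨j, ε⟩, rfl⟩ := toLex.surjective p
    simp only [ofLex_toLex, toLex_inj, Prod.mk.injEq, Fin.ext_iff]
    omega
  right_inv m := by
    ext
    simp only [ofLex_toLex]
    omega
  map_rel_iff' {p q} := by
    obtain ⟨⟨j, ε⟩, rfl⟩ := toLex.surjective p
    obtain ⟨⟨j', ε'⟩, rfl⟩ := toLex.surjective q
    simp only [Equiv.coe_fn_mk, ofLex_toLex, Prod.Lex.toLex_le_toLex, Fin.lt_def, Fin.le_def,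
      Fin.ext_iff]
    omega

def unzip (k : ℕ) : (Fin (2 * k) → R) ≃ₗ[R] (Fin k → Fin 2 → R) :=
  (LinearEquiv.funCongrLeft R R (toLex.trans (interleave k).toEquiv)).trans
    (LinearEquiv.curry R R (Fin k) (Fin 2))

variable {k : ℕ}

@[simp]
theorem interleave_toLex (j : Fin k) (ε : Fin 2) :
    interleave k (toLex (j, ε)) = ⟨2 * j + ε, by omega⟩ := rfl

@[simp]
theorem unzip_apply (x : Fin (2 * k) → R) (j : Fin k) (ε : Fin 2) :
    unzip k x j ε = x (interleave k (toLex (j, ε))) := rfl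

theorem esymm2_eq_unzip (x : Fin (2 * k) → R) :
    esymm2 x = ∑ j, unzip k x j 0 * unzip k x j 1
      + esymm2 (fun j => unzip k x j 0 + unzip k x j 1) := by
  rw [← esymm2_comp_orderIso (interleave k), esymm2_lex]
  simp only [esymm2_fin_two, Fin.sum_univ_two]
  rfl

theorem sum_eq_unzip (x : Fin (2 * k) → R) :
    ∑ i, x i = ∑ j, (unzip k x j 0 + unzip k x j 1) := by
  rw [← (interleave k).toEquiv.sum_comp, Fintype.sum_lex]
  simp only [Fin.sum_univ_two]
  rfl

-- `c j = 0` puts `α_Cl(2,0)` on the `j`-th pair, `c j = 1` puts `α_Cl(0,2)` there.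
def pairForm {ι : Type*} [Fintype ι] (c : ι → R) (y : ι → Fin 2 → R) : R :=
  ∑ j, (y j 0 * y j 1 + c j * (y j 0 + y j 1))

theorem pairForm_equivalent_comp_perm {ι : Type*} [Fintype ι] (c : ι → R)
    (σ : Equiv.Perm ι) : FormEquivalent (pairForm c) (pairForm (c ∘ σ)) := by
  refine ⟨LinearEquiv.funCongrLeft R (Fin 2 → R) σ.symm, fun y => ?_⟩
  rw [pairForm, ← Equiv.sum_comp σ]
  simp [pairForm]

theorem Fin.sum_sum_Ioi (s : Fin k → R) :
    ∑ j, ∑ i ∈ Ioi j, s i = ∑ i : Fin k, ((i : ℕ) : R) * s i := by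
  rw [sum_comm' (t' := univ) (s' := Iio) (by simp)]
  simp [Fin.card_Iio]

end pairs

section shear

variable {k : ℕ}

def shearMap (k : ℕ) : (Fin k → Fin 2 → ZMod 2) →ₗ[ZMod 2] (Fin k → Fin 2 → ZMod 2) where
  toFun y j ε := y j ε + ∑ i ∈ Ioi j, (y i 0 + y i 1)
  map_add' y z := by
    ext j ε
    simp only [Pi.add_apply, sum_add_distrib]
    ring
  map_smul' a y := by
    ext j ε
    simp only [Pi.smul_apply, smul_eq_mul, RingHom.id_apply, mul_add, mul_sum]

theorem shearMap_involutive : Function.Involutive (shearMap k) := by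
  intro y
  ext j ε
  simp only [shearMap, LinearMap.coe_mk, AddHom.coe_mk, add_add_add_comm _ (∑ _ ∈ _, _),
    CharTwo.add_self_eq_zero, add_zero, CharTwo.add_cancel_right]

def shear (k : ℕ) : (Fin k → Fin 2 → ZMod 2) ≃ₗ[ZMod 2] (Fin k → Fin 2 → ZMod 2) :=
  LinearEquiv.ofInvolutive (shearMap k) shearMap_involutive

theorem pairForm_shear (c : ZMod 2) (y : Fin k → Fin 2 → ZMod 2) :
    pairForm (fun j : Fin k => ((j : ℕ) : ZMod 2) + c) (shear k y)
      = ∑ j, y j 0 * y j 1 + esymm2 (fun j => y j 0 + y j 1)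
        + c * ∑ j, (y j 0 + y j 1) := by
  set s : Fin k → ZMod 2 := fun j => y j 0 + y j 1
  set T : Fin k → ZMod 2 := fun j => ∑ i ∈ Ioi j, s i
  have hterm : ∀ j : Fin k, shear k y j 0 * shear k y j 1
      + (((j : ℕ) : ZMod 2) + c) * (shear k y j 0 + shear k y j 1)
        = y j 0 * y j 1 + s j * T j + (T j + ((j : ℕ) : ZMod 2) * s j) + c * s j := fun j =>
    show (y j 0 + T j) * (y j 1 + T j) + _ * (y j 0 + T j + (y j 1 + T j)) = _ by
      linear_combination
        ZMod.pow_card (T j) + ((j + c) * T j) * CharTwo.two_eq_zero (R := ZMod 2)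
  have hT : ∑ j, T j = ∑ j : Fin k, ((j : ℕ) : ZMod 2) * s j := Fin.sum_sum_Ioi s
  have hsT : ∑ j, s j * T j = esymm2 s := (esymm2_eq_sum_mul_sum_Ioi s).symm
  rw [pairForm, sum_congr rfl fun j _ => hterm j, sum_add_distrib, sum_add_distrib,
    sum_add_distrib, sum_add_distrib, hT, hsT, CharTwo.add_self_eq_zero, add_zero, ← mul_sum]

end shear

theorem exists_perm_natCast_add_eq_ite {k : ℕ} (hk : 2 ∣ k) (c : ZMod 2) :
    ∃ σ : Equiv.Perm (Fin k),
      ∀ j, ((σ j : ℕ) : ZMod 2) + c = if (j : ℕ) < k / 2 then 1 else 0 := by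
  obtain ⟨m, rfl⟩ := hk
  obtain ⟨f, hf⟩ : ∃ f : Equiv.Perm (Fin 2),
      ∀ ε, ((f ε : ℕ) : ZMod 2) + c = if ε = 0 then 1 else 0 := by
    fin_cases c
    exacts [⟨Equiv.swap 0 1, by decide⟩, ⟨Equiv.refl _, by decide⟩]
  -- `i + m ε` (block coordinates) is sent to `2 i + f ε` (interleaved coordinates).
  refine ⟨finProdFinEquiv.symm.trans ((f.prodCongr (Equiv.refl _)).trans
    ((Equiv.prodComm _ _).trans (toLex.trans (interleave m).toEquiv))), fun j => ?_⟩
  obtain ⟨⟨ε, i⟩, rfl⟩ := finProdFinEquiv.surjective j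
  simp only [Equiv.trans_apply, Equiv.symm_apply_apply, Equiv.prodCongr_apply, Prod.map,
    Equiv.prodComm_apply, Prod.swap, Equiv.refl_apply, OrderIso.coe_toEquiv, interleave_toLex,
    finProdFinEquiv_apply_val, Nat.mul_div_cancel_left m two_pos]
  push_cast
  rw [CharTwo.two_eq_zero (R := ZMod 2), zero_mul, zero_add, hf]
  fin_cases ε <;> simp

theorem esymm2_add_mul_sum_equivalent_pairForm (k : ℕ) (c : ZMod 2) :
    FormEquivalent (fun x : Fin (2 * k) → ZMod 2 => esymm2 x + c * ∑ i, x i)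
      (pairForm fun j : Fin k => ((j : ℕ) : ZMod 2) + c) := by
  refine ⟨(shear k).trans (unzip k).symm, fun y => ?_⟩
  dsimp only
  rw [LinearEquiv.trans_apply, esymm2_eq_unzip, sum_eq_unzip, LinearEquiv.apply_symm_apply,
    ← pairForm_shear]
  congr 1
  exact shearMap_involutive y

theorem cliffordForm_cast {p q n : ℕ} (h : p + q = n) (x : Fin n → ZMod 2) :
    cliffordForm p q (fun i => x (Fin.cast h i))
      = esymm2 x + ∑ i ∈ univ.filter (fun i : Fin n => p ≤ (i : ℕ)), x i := by
  subst h
  rfl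

/-- for even `k`, the forms `α_Cl(2k,0)` and `α_Cl(0,2k)` on
`(ℤ/2)^{2k}` are equivalent to each other and to the direct sum of `k/2`
copies of `α_Cl(0,2)(u,v) = uv + u + v` followed by `k/2` copies of
`α_Cl(2,0)(u,v) = uv` on consecutive pairs of coordinates. -/
theorem stmt_7 (k : ℕ) (hk : 2 ∣ k) :
    let τ : (Fin (2 * k) → ZMod 2) → ZMod 2 := fun x =>
      ∑ j : Fin k,
        (x ⟨2 * (j : ℕ), by have := j.isLt; omega⟩ *
           x ⟨2 * (j : ℕ) + 1, by have := j.isLt; omega⟩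
         + if (j : ℕ) < k / 2 then
             x ⟨2 * (j : ℕ), by have := j.isLt; omega⟩ +
               x ⟨2 * (j : ℕ) + 1, by have := j.isLt; omega⟩
           else 0)
    let α₁ : (Fin (2 * k) → ZMod 2) → ZMod 2 := fun x =>
      cliffordForm (2 * k) 0 (fun i => x (Fin.cast (by omega) i))
    let α₂ : (Fin (2 * k) → ZMod 2) → ZMod 2 := fun x =>
      cliffordForm 0 (2 * k) (fun i => x (Fin.cast (by omega) i))
    (∃ G : (Fin (2 * k) → ZMod 2) ≃ₗ[ZMod 2] (Fin (2 * k) → ZMod 2),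
        ∀ x, α₁ (G x) = α₂ x) ∧
    (∃ G : (Fin (2 * k) → ZMod 2) ≃ₗ[ZMod 2] (Fin (2 * k) → ZMod 2),
        ∀ x, α₁ (G x) = τ x) ∧
    (∃ G : (Fin (2 * k) → ZMod 2) ≃ₗ[ZMod 2] (Fin (2 * k) → ZMod 2),
        ∀ x, α₂ (G x) = τ x) := by
  intro τ α₁ α₂
  have hτ (c : ZMod 2) :
      FormEquivalent (fun x : Fin (2 * k) → ZMod 2 => esymm2 x + c * ∑ i, x i) τ := by
    obtain ⟨σ, hσ⟩ := exists_perm_natCast_add_eq_ite hk c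
    refine (esymm2_add_mul_sum_equivalent_pairForm k c).trans
      ((pairForm_equivalent_comp_perm _ σ).trans ⟨unzip k, fun x => ?_⟩)
    simp only [pairForm, Function.comp_apply, hσ, ite_mul, one_mul, zero_mul, unzip_apply,
      interleave_toLex]
    rfl
  have hα₁ : α₁ = fun x => esymm2 x + 0 * ∑ i, x i := funext fun x => by
    simp only [α₁, cliffordForm_cast, zero_mul, add_zero,
      filter_false_of_mem fun (i : Fin (2 * k)) _ => not_le.mpr i.isLt, sum_empty]
  have hα₂ : α₂ = fun x => esymm2 x + 1 * ∑ i, x i := funext fun x => by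
    simp only [α₂, cliffordForm_cast, one_mul, zero_le, filter_true]
  rw [hα₁, hα₂]
  exact ⟨(hτ 0).trans (hτ 1).symm, hτ 0, hτ 1⟩
end

section
/- Let f_O : (Z/2)^n × (Z/2)^n → Z/2 be defined by f_O(x,y) = Σ_{i<j<k} (x_i x_j y_k + x_i y_j x_k + y_i x_j x_k) + Σ_{i≤j} x_i y_j. Then the function α(x) := f_O(x,x) equals Σ_{i<j<k} x_i x_j x_k + Σ_{i<j} x_i x_j + Σ_i x_i, and moreover f_O(x,y) + f_O(y,x) = α(x+y) + α(x) + α(y) for all x,y. -/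
/-!
Everything is termwise. Since `2 = 0` in `ZMod 2`, the three mixed cubic terms of `f(x, y)` and
of `f(y, x)` together are the six mixed terms of `(x + y)ᵢ (x + y)ⱼ (x + y)ₖ`, i.e. the cubic
polarization of `α`; likewise for the quadratic terms, and the diagonal terms `xᵢ yᵢ + yᵢ xᵢ`
vanish just as `(x + y)ᵢ + xᵢ + yᵢ` does. On the diagonal `x = y` the cubic terms collapse by
`3 = 1` and the terms `xᵢ xᵢ` become the linear part of `α` by `a² = a`.
-/

/-- The twisting function `f_O` of the algebra `O_n`:
`f_O(x,y) = Σ_{i<j<k}(x_i x_j y_k + x_i y_j x_k + y_i x_j x_k) + Σ_{i≤j} x_i y_j`. -/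
def twistO (n : ℕ) (x y : Fin n → ZMod 2) : ZMod 2 :=
  (∑ t ∈ Finset.univ.filter
      (fun t : Fin n × Fin n × Fin n => t.1 < t.2.1 ∧ t.2.1 < t.2.2),
      (x t.1 * x t.2.1 * y t.2.2 + x t.1 * y t.2.1 * x t.2.2
        + y t.1 * x t.2.1 * x t.2.2))
  + ∑ t ∈ Finset.univ.filter (fun t : Fin n × Fin n => t.1 ≤ t.2),
      x t.1 * y t.2

open Finset

theorem Finset.sum_filter_le_eq_sum_filter_lt_add_sum {ι M : Type*} [LinearOrder ι] [Fintype ι]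
    [AddCommMonoid M] (g : ι → ι → M) :
    ∑ t ∈ univ.filter (fun t : ι × ι => t.1 ≤ t.2), g t.1 t.2
      = ∑ t ∈ univ.filter (fun t : ι × ι => t.1 < t.2), g t.1 t.2 + ∑ i, g i i := by
  rw [← sum_filter_add_sum_filter_not _ (fun t : ι × ι => t.1 < t.2), filter_filter,
    filter_filter]
  have hlt : univ.filter (fun t : ι × ι => t.1 ≤ t.2 ∧ t.1 < t.2)
      = univ.filter (fun t : ι × ι => t.1 < t.2) :=
    filter_congr fun t _ => and_iff_right_of_imp le_of_lt
  have hdiag : univ.filter (fun t : ι × ι => t.1 ≤ t.2 ∧ ¬ t.1 < t.2) = univ.diag := by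
    ext t
    simp only [mem_filter, mem_univ, true_and, not_lt, mem_diag, ← le_antisymm_iff]
  rw [hlt, hdiag, sum_diag]

namespace CharTwo

variable {R : Type*} [CommRing R] [CharP R 2]

theorem add_add_self (a : R) : a + a + a = a := by
  linear_combination a * two_eq_zero (R := R)

theorem linear_polarization (a b : R) : a * b + b * a = (a + b) + a + b := by
  linear_combination (a * b - a - b) * two_eq_zero (R := R)

theorem quadratic_polarization (a b c d : R) :
    a * d + c * b = (a + c) * (b + d) + a * b + c * d := by
  linear_combination (-(a * b) - c * d) * two_eq_zero (R := R)

theorem cubic_polarization (a b c d e f : R) :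
    (a * b * f + a * e * c + d * b * c) + (d * e * c + d * b * f + a * e * f)
      = (a + d) * (b + e) * (c + f) + a * b * c + d * e * f := by
  linear_combination (-(a * b * c) - d * e * f) * two_eq_zero (R := R)

end CharTwo

theorem twistO_split_diagonal (n : ℕ) (x y : Fin n → ZMod 2) :
    twistO n x y
      = (∑ t ∈ univ.filter (fun t : Fin n × Fin n × Fin n => t.1 < t.2.1 ∧ t.2.1 < t.2.2),
          (x t.1 * x t.2.1 * y t.2.2 + x t.1 * y t.2.1 * x t.2.2 + y t.1 * x t.2.1 * x t.2.2))
        + (∑ t ∈ univ.filter (fun t : Fin n × Fin n => t.1 < t.2), x t.1 * y t.2)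
        + ∑ i, x i * y i := by
  rw [twistO, sum_filter_le_eq_sum_filter_lt_add_sum (fun i j => x i * y j), add_assoc]

theorem twistO_self (n : ℕ) (x : Fin n → ZMod 2) : twistO n x x = cubicFormOn n x := by
  rw [twistO_split_diagonal, cubicFormOn]
  simp only [CharTwo.add_add_self, ← sq, ZMod.pow_card]

theorem twistO_add_twistO_swap (n : ℕ) (x y : Fin n → ZMod 2) :
    twistO n x y + twistO n y x = cubicFormOn n (x + y) + cubicFormOn n x + cubicFormOn n y := by
  rw [twistO_split_diagonal, twistO_split_diagonal]
  simp only [cubicFormOn, Pi.add_apply]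
  have cubic := sum_congr (s₁ := univ.filter
      (fun t : Fin n × Fin n × Fin n => t.1 < t.2.1 ∧ t.2.1 < t.2.2)) rfl fun t _ =>
    CharTwo.cubic_polarization (x t.1) (x t.2.1) (x t.2.2) (y t.1) (y t.2.1) (y t.2.2)
  have quadratic := sum_congr (s₁ := univ.filter (fun t : Fin n × Fin n => t.1 < t.2)) rfl
    fun t _ => CharTwo.quadratic_polarization (x t.1) (x t.2) (y t.1) (y t.2)
  have linear := sum_congr (s₁ := univ) rfl fun i _ => CharTwo.linear_polarization (x i) (y i)
  simp only [sum_add_distrib] at cubic quadratic linear ⊢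
  linear_combination cubic + quadratic + linear

/-- `f_O(x,x) = α_n(x)`, and
`f_O(x,y) + f_O(y,x) = α_n(x+y) + α_n(x) + α_n(y)`: the cubic form `α_n`
satisfies conditions (i) and (ii) of a generating function for `f_O`. -/
theorem stmt_11 (n : ℕ) :
    (∀ x : Fin n → ZMod 2, twistO n x x = cubicFormOn n x) ∧
    (∀ x y : Fin n → ZMod 2,
      twistO n x y + twistO n y x
        = cubicFormOn n (x + y) + cubicFormOn n x + cubicFormOn n y) :=
  ⟨twistO_self n, twistO_add_twistO_swap n⟩
end

section
/- Let f_O be the twisting function of O_n as above and let φ := δ f_O, i.e. φ(x,y,z) = f_O(x,y) + f_O(x,y+z) + f_O(x+y,z) + f_O(y,z). Then φ(x,y,z) = α_n(x+y+z) + α_n(x+y) + α_n(x+z) + α_n(y+z) + α_n(x) + α_n(y) + α_n(z) for all x,y,z ∈ (Z/2)^n, where α_n(x) = Σ_{i<j<k} x_i x_j x_k + Σ_{i<j} x_i x_j + Σ_i x_i. In particular φ is symmetric in its three arguments. -/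
/-
Both sides are additive in the form, and `f_O`, `α_n` are sums over index pairs and triples of
products of coordinates. Over a ring of characteristic 2 (where the signs of the coboundary and
of the polarization disappear) the coboundary of `u x * v y` and the third polarizations of
`u x * v x` and `u x` vanish, since every cross term occurs an even number of times. The cubic
part of `f_O` is `T(x,x,y) + T(x,y,x) + T(y,x,x)` for the trilinear `T` with `T(x,x,x)` the cubic
part of `α_n`; its coboundary and the polarization of `T(x,x,x)` both equal `∑_σ T(σ(x,y,z))`.
-/

section Cochains

variable {V R : Type*}

def coboundary [Add V] [Add R] (f : V → V → R) (x y z : V) : R :=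
  f x y + f x (y + z) + f (x + y) z + f y z

def polarization3 [Add V] [Add R] (α : V → R) (x y z : V) : R :=
  α (x + y + z) + α (x + y) + α (x + z) + α (y + z) + α x + α y + α z

variable [AddCommMonoid R] {ι : Type*} (s : Finset ι) (x y z : V)

theorem coboundary_add [Add V] (f g : V → V → R) :
    coboundary (fun x y => f x y + g x y) x y z = coboundary f x y z + coboundary g x y z := by
  simp only [coboundary]; abel

theorem coboundary_sum [Add V] (f : ι → V → V → R) :
    coboundary (fun x y => ∑ t ∈ s, f t x y) x y z = ∑ t ∈ s, coboundary (f t) x y z := by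
  simp only [coboundary, Finset.sum_add_distrib]

theorem polarization3_add [Add V] (α β : V → R) :
    polarization3 (fun x => α x + β x) x y z = polarization3 α x y z + polarization3 β x y z := by
  simp only [polarization3]; abel

theorem polarization3_sum [Add V] (α : ι → V → R) :
    polarization3 (fun x => ∑ t ∈ s, α t x) x y z = ∑ t ∈ s, polarization3 (α t) x y z := by
  simp only [polarization3, Finset.sum_add_distrib]

variable [AddCommSemigroup V]

theorem polarization3_comm₁₂ (α : V → R) :
    polarization3 α x y z = polarization3 α y x z := by
  simp only [polarization3, add_comm y x]; abel

theorem polarization3_comm₂₃ (α : V → R) :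
    polarization3 α x y z = polarization3 α x z y := by
  simp only [polarization3, add_right_comm x z y, add_comm z y]; abel

end Cochains

section CharTwoRing

variable {V R : Type*} [AddZeroClass V] [CommRing R] [CharP R 2] (u v w : V →+ R) (x y z : V)

theorem coboundary_mul_eq_zero :
    coboundary (fun x y => u x * v y) x y z = 0 := by
  simp only [coboundary, map_add]; grind

theorem polarization3_mul_eq_zero :
    polarization3 (fun x => u x * v x) x y z = 0 := by
  simp only [polarization3, map_add]; grind

theorem polarization3_addMonoidHom_eq_zero :
    polarization3 u x y z = 0 := by
  simp only [polarization3, map_add]; grind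

theorem coboundary_symmetrize_eq_polarization3 :
    coboundary (fun x y => u x * v x * w y + u x * v y * w x + u y * v x * w x) x y z =
      polarization3 (fun x => u x * v x * w x) x y z := by
  simp only [coboundary, polarization3, map_add]; grind

end CharTwoRing

theorem coboundary_twistO (n : ℕ) (x y z : Fin n → ZMod 2) :
    coboundary (twistO n) x y z = polarization3 (cubicFormOn n) x y z := by
  let e (i : Fin n) : (Fin n → ZMod 2) →+ ZMod 2 := Pi.evalAddMonoidHom _ i
  have hcub (t : Fin n × Fin n × Fin n) :=
    coboundary_symmetrize_eq_polarization3 (e t.1) (e t.2.1) (e t.2.2) x y z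
  have hbil (t : Fin n × Fin n) := coboundary_mul_eq_zero (e t.1) (e t.2) x y z
  have hquad (t : Fin n × Fin n) := polarization3_mul_eq_zero (e t.1) (e t.2) x y z
  have hlin (i : Fin n) : polarization3 (fun x => x i) x y z = 0 :=
    polarization3_addMonoidHom_eq_zero (e i) x y z
  simp only [e, Pi.evalAddMonoidHom_apply] at hcub hbil hquad
  delta twistO cubicFormOn
  simp only [coboundary_add, coboundary_sum, polarization3_add, polarization3_sum,
    hcub, hbil, hquad, hlin, Finset.sum_const_zero, add_zero]

/-- the coboundary `φ = δ f_O` equals the third polarization of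
`α_n`; in particular `φ` is symmetric in its three arguments. -/
theorem stmt_12 (n : ℕ) :
    let φ : (Fin n → ZMod 2) → (Fin n → ZMod 2) → (Fin n → ZMod 2) → ZMod 2 :=
      fun x y z =>
        twistO n x y + twistO n x (y + z) + twistO n (x + y) z + twistO n y z
    (∀ x y z : Fin n → ZMod 2,
      φ x y z = cubicFormOn n (x + y + z) + cubicFormOn n (x + y)
        + cubicFormOn n (x + z) + cubicFormOn n (y + z)
        + cubicFormOn n x + cubicFormOn n y + cubicFormOn n z) ∧
    (∀ x y z : Fin n → ZMod 2, φ x y z = φ y x z ∧ φ x y z = φ x z y) := by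
  intro φ
  have hφ (x y z : Fin n → ZMod 2) : φ x y z = polarization3 (cubicFormOn n) x y z :=
    coboundary_twistO n x y z
  exact ⟨hφ, fun x y z => by
    simp only [hφ]
    exact ⟨polarization3_comm₁₂ .., polarization3_comm₂₃ ..⟩⟩
end

section
/- The zero set of the cubic form α_{0,n}(x) = Σ_{i<j<k} x_i x_j x_k + Σ_{i<j} x_i x_j + Σ_i x_i on (Z/2)^n has cardinality equal to the number of vectors of Hamming weight divisible by 4, namely Σ_{j ≡ 0 mod 4} C(n, j). -/
open Finset

theorem choose_two_three_mod_two (w : ℕ) :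
    w.choose 2 % 2 = w % 4 / 2 ∧ w.choose 3 % 2 = w % 4 / 3 := by
  induction w with
  | zero => simp
  | succ w ih =>
    have h2 : (w + 1).choose 2 = w + w.choose 2 := by
      rw [Nat.choose_succ_succ, Nat.choose_one_right]
    have h3 : (w + 1).choose 3 = w.choose 2 + w.choose 3 := Nat.choose_succ_succ w 2
    rw [h2, h3]
    have : w % 4 < 4 := Nat.mod_lt w (by norm_num)
    interval_cases hw : w % 4 <;> omega

theorem natCast_choose_three_add_choose_two_add_self_eq_zero_iff (w : ℕ) :
    ((w.choose 3 + w.choose 2 + w : ℕ) : ZMod 2) = 0 ↔ w % 4 = 0 := by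
  rw [ZMod.natCast_eq_zero_iff_even, Nat.even_iff]
  have := choose_two_three_mod_two w
  have : w % 4 < 4 := Nat.mod_lt w (by norm_num)
  interval_cases hw : w % 4 <;> omega

section LinearOrder

variable {α : Type*} [LinearOrder α]

theorem card_filter_lt_product_self (s : Finset α) :
    #{p ∈ s ×ˢ s | p.1 < p.2} = (#s).choose 2 := by
  induction s using Finset.induction_on_max with
  | empty => simp
  | insert a s ha ih =>
    have hnew : {p ∈ insert a s ×ˢ insert a s | p.1 < p.2}
        = {p ∈ s ×ˢ s | p.1 < p.2} ∪ s.image (·, a) := by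
      ext ⟨b, c⟩
      simp only [mem_filter, mem_product, mem_insert, mem_union, mem_image, Prod.mk.injEq]
      grind
    have hdisj : Disjoint {p ∈ s ×ˢ s | p.1 < p.2} (s.image (·, a)) := by
      simp only [disjoint_left, mem_filter, mem_product, mem_image]
      grind
    rw [hnew, card_union_of_disjoint hdisj, ih, card_image_of_injective _ (Prod.mk_left_injective a),
      card_insert_of_notMem (fun h => (ha a h).false), Nat.choose_succ_succ', Nat.choose_one_right,
      add_comm]

theorem card_filter_lt_lt_product_self (s : Finset α) :
    #{t ∈ s ×ˢ s ×ˢ s | t.1 < t.2.1 ∧ t.2.1 < t.2.2} = (#s).choose 3 := by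
  induction s using Finset.induction_on_max with
  | empty => simp
  | insert a s ha ih =>
    have hnew : {t ∈ insert a s ×ˢ insert a s ×ˢ insert a s | t.1 < t.2.1 ∧ t.2.1 < t.2.2}
        = {t ∈ s ×ˢ s ×ˢ s | t.1 < t.2.1 ∧ t.2.1 < t.2.2} ∪
          {p ∈ s ×ˢ s | p.1 < p.2}.image (fun p => (p.1, p.2, a)) := by
      ext ⟨b, c, d⟩
      simp only [mem_filter, mem_product, mem_insert, mem_union, mem_image, Prod.mk.injEq,
        Prod.exists]
      grind
    have hdisj : Disjoint {t ∈ s ×ˢ s ×ˢ s | t.1 < t.2.1 ∧ t.2.1 < t.2.2}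
        ({p ∈ s ×ˢ s | p.1 < p.2}.image (fun p => (p.1, p.2, a))) := by
      simp only [disjoint_left, mem_filter, mem_product, mem_image]
      grind
    rw [hnew, card_union_of_disjoint hdisj, ih, card_image_of_injective _ (fun p q h => by grind),
      card_filter_lt_product_self, card_insert_of_notMem (fun h => (ha a h).false),
      Nat.choose_succ_succ', add_comm]

end LinearOrder

namespace ZMod

theorem eq_ite_ne_zero_of_two (a : ZMod 2) : a = if a ≠ 0 then 1 else 0 := by
  revert a; decide

theorem mul_eq_ite_ne_zero_of_two (a b : ZMod 2) :
    a * b = if a ≠ 0 ∧ b ≠ 0 then 1 else 0 := by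
  revert a b; decide

theorem mul_mul_eq_ite_ne_zero_of_two (a b c : ZMod 2) :
    a * b * c = if a ≠ 0 ∧ b ≠ 0 ∧ c ≠ 0 then 1 else 0 := by
  revert a b c; decide

end ZMod

section HammingWeight

variable {ι : Type*} [Fintype ι]

def funZModTwoEquivFinset [DecidableEq ι] : (ι → ZMod 2) ≃ Finset ι where
  toFun x := {i | x i ≠ 0}
  invFun s i := if i ∈ s then 1 else 0
  left_inv x := funext fun i => by simp [← ZMod.eq_ite_ne_zero_of_two (x i)]
  right_inv s := by ext i; by_cases hi : i ∈ s <;> simp [hi]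

theorem card_filter_hammingNorm_eq [DecidableEq ι] (j : ℕ) :
    #{x : ι → ZMod 2 | hammingNorm x = j} = (Fintype.card ι).choose j := by
  rw [← card_univ, ← card_powersetCard]
  exact card_equiv funZModTwoEquivFinset fun x => by simp [hammingNorm, funZModTwoEquivFinset]

theorem sum_eq_hammingNorm (x : ι → ZMod 2) : ∑ i, x i = hammingNorm x := by
  rw [sum_congr rfl fun i _ => ZMod.eq_ite_ne_zero_of_two (x i), sum_boole]
  rfl

variable [LinearOrder ι]

theorem sum_filter_lt_mul_eq_choose_hammingNorm (x : ι → ZMod 2) :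
    ∑ p ∈ univ.filter (fun p : ι × ι => p.1 < p.2), x p.1 * x p.2
      = ((hammingNorm x).choose 2 : ℕ) := by
  rw [sum_congr rfl fun p _ => ZMod.mul_eq_ite_ne_zero_of_two _ _, sum_boole, filter_filter,
    hammingNorm, ← card_filter_lt_product_self]
  congr 2
  ext ⟨i, j⟩
  simp only [mem_filter, mem_univ, true_and, mem_product]
  tauto

theorem sum_filter_lt_lt_mul_mul_eq_choose_hammingNorm (x : ι → ZMod 2) :
    ∑ t ∈ univ.filter (fun t : ι × ι × ι => t.1 < t.2.1 ∧ t.2.1 < t.2.2),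
        x t.1 * x t.2.1 * x t.2.2
      = ((hammingNorm x).choose 3 : ℕ) := by
  rw [sum_congr rfl fun t _ => ZMod.mul_mul_eq_ite_ne_zero_of_two _ _ _, sum_boole, filter_filter,
    hammingNorm, ← card_filter_lt_lt_product_self]
  congr 2
  ext ⟨i, j, k⟩
  simp only [mem_filter, mem_univ, true_and, mem_product]
  tauto

end HammingWeight

theorem cubicFormOn_eq_choose_hammingNorm (n : ℕ) (x : Fin n → ZMod 2) :
    cubicFormOn n x =
      ((hammingNorm x).choose 3 + (hammingNorm x).choose 2 + hammingNorm x : ℕ) := by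
  rw [cubicFormOn, sum_filter_lt_lt_mul_mul_eq_choose_hammingNorm,
    sum_filter_lt_mul_eq_choose_hammingNorm, sum_eq_hammingNorm, Nat.cast_add, Nat.cast_add]

theorem cubicFormOn_eq_zero_iff (n : ℕ) (x : Fin n → ZMod 2) :
    cubicFormOn n x = 0 ↔ hammingNorm x % 4 = 0 := by
  rw [cubicFormOn_eq_choose_hammingNorm, natCast_choose_three_add_choose_two_add_self_eq_zero_iff]

/-- the zero set of `α_{0,n}` on `(ℤ/2)^n` has cardinality
`Σ_{j ≡ 0 (4)} C(n,j)`, the number of vectors of Hamming weight divisible by 4. -/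
theorem stmt_18 (n : ℕ) :
    (Finset.univ.filter
        (fun x : Fin n → ZMod 2 => cubicFormOn n x = 0)).card
      = ∑ j ∈ (Finset.range (n + 1)).filter (fun j => j % 4 = 0),
          Nat.choose n j := by
  have hmaps : ∀ x ∈ univ.filter (fun x : Fin n → ZMod 2 => cubicFormOn n x = 0),
      hammingNorm x ∈ (range (n + 1)).filter (fun j => j % 4 = 0) := fun x hx => by
    rw [mem_filter, cubicFormOn_eq_zero_iff] at hx
    rw [mem_filter, mem_range, Nat.lt_succ_iff]
    exact ⟨hammingNorm_le_card_fintype.trans_eq (Fintype.card_fin n), hx.2⟩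
  rw [card_eq_sum_card_fiberwise hmaps]
  refine sum_congr rfl fun j hj => ?_
  have hfiber (x : Fin n → ZMod 2) : cubicFormOn n x = 0 ∧ hammingNorm x = j ↔ hammingNorm x = j :=
    and_iff_right_of_imp fun hx => (cubicFormOn_eq_zero_iff n x).2 (hx ▸ (mem_filter.1 hj).2)
  simp only [filter_filter, hfiber]
  rw [card_filter_hammingNorm_eq, Fintype.card_fin]
end
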